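/- Let k be a field, A a finitely generated free abelian group, B a subgroup of A, and suppose a kA-module W satisfies W = ⊕_{s∈S} (wkB)s for a right transversal S of B in A and some w ∈ W. Then Ann_{kA}(w) = (Ann_{kA}(w) ∩ kB)·kA. -/

import Mathlib

/-- For an independent family of submodules, a finite sum of members equal to
zero has all terms zero. -/
theorem iSupIndep_sum_eq_zero {R N ι : Type*} [Ring R] [AddCommGroup N] [Module R N]
    {p : ι → Submodule R N} (h : iSupIndep p) {T : Finset ι} {v : ι → N}
    (hv : ∀ i ∈ T, v i ∈ p i) (hs : ∑ i ∈ T, v i = 0) : ∀ i ∈ T, v i = 0 := by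
  classical
  intro i hi
  have h1 : v i ∈ p i := hv i hi
  have h2 : v i ∈ ⨆ (j) (_ : j ≠ i), p j := by
    have hvi : v i = -∑ j ∈ T.erase i, v j := by
      have h0 : ∑ j ∈ T.erase i, v j + v i = 0 := by
        rw [Finset.sum_erase_add T v hi, hs]
      exact eq_neg_of_add_eq_zero_right h0
    rw [hvi]
    exact neg_mem (Submodule.sum_mem _ fun j hj =>
      Submodule.mem_iSup_of_mem j (Submodule.mem_iSup_of_mem (Finset.ne_of_mem_erase hj)
        (hv j (Finset.mem_of_mem_erase hj))))
  simpa using (h (i := i)).le_bot (Submodule.mem_inf.mpr ⟨h1, h2⟩)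

/-- The `k`-linear action of a group element `g` on a module over the group algebra. -/
noncomputable def gsmul (k : Type*) [CommSemiring k] {G : Type*} [Group G]
    (M : Type*) [AddCommMonoid M] [Module k M] [Module (MonoidAlgebra k G) M]
    [IsScalarTower k (MonoidAlgebra k G) M] (g : G) : M →ₗ[k] M where
  toFun m := MonoidAlgebra.of k G g • m
  map_add' x y := smul_add _ x y
  map_smul' c x := by
    simp only [RingHom.id_apply]
    rw [← algebraMap_smul (MonoidAlgebra k G) c x, ← mul_smul,
      ← Algebra.commutes c (MonoidAlgebra.of k G g), mul_smul, algebraMap_smul]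

/-- If `W = ⊕_{s∈S} (w·kB)s` over a right transversal `S` of `B` in the finitely
generated free abelian group `A`, then `Ann_{kA}(w) = (Ann_{kA}(w) ∩ kB)·kA`. -/
theorem stmt_19 {k : Type*} [Field k] {A : Type*} [CommGroup A] [Group.FG A]
    (htf : ∀ g : A, g ≠ 1 → ¬IsOfFinOrder g) (B : Subgroup A)
    (W : Type*) [AddCommGroup W] [Module k W] [Module (MonoidAlgebra k A) W]
    [IsScalarTower k (MonoidAlgebra k A) W]
    (w : W)
    (wkB : Submodule k W)
    (hwkB : wkB = Submodule.span k {m : W | ∃ b ∈ B, m = MonoidAlgebra.of k A b • w})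
    (S : Set A) (htrans : ∀ a : A, ∃! s, s ∈ S ∧ a * s⁻¹ ∈ B)
    (hindep : iSupIndep (fun s : S => wkB.map (gsmul k W (s : A))))
    (hsup : (⨆ s : S, wkB.map (gsmul k W (s : A))) = ⊤) :
    (Submodule.span (MonoidAlgebra k A) {w}).annihilator =
      ((Submodule.span (MonoidAlgebra k A) {w}).annihilator.comap
          (MonoidAlgebra.mapDomainRingHom k B.subtype)).map
        (MonoidAlgebra.mapDomainRingHom k B.subtype) := by
  classical
  set f := MonoidAlgebra.mapDomainRingHom k B.subtype with hf
  set I := (Submodule.span (MonoidAlgebra k A) {w}).annihilator with hIdef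
  refine le_antisymm ?_ Ideal.map_comap_le
  intro x hx
  have hxw : x • w = 0 := (Submodule.mem_annihilator_span_singleton w x).mp hx
  -- choose representatives
  choose σ hσ using fun a : A => (htrans a).exists
  have hσS : ∀ a, σ a ∈ S := fun a => (hσ a).1
  have hσB : ∀ a, a * (σ a)⁻¹ ∈ B := fun a => (hσ a).2
  set σ' : A → S := fun a => ⟨σ a, hσS a⟩ with hσ'
  set T : Finset S := x.coeff.support.image σ' with hT
  set y : S → MonoidAlgebra k B := fun s =>
    ∑ a ∈ x.coeff.support.filter (fun a => σ' a = s),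
      MonoidAlgebra.single (⟨a * (σ a)⁻¹, hσB a⟩ : B) (x.coeff a) with hy
  -- f (y s) computed
  have hfy : ∀ s : S, f (y s) =
      ∑ a ∈ x.coeff.support.filter (fun a => σ' a = s),
        MonoidAlgebra.single (a * (σ a)⁻¹) (x.coeff a) := by
    intro s
    rw [hy]
    rw [map_sum]
    refine Finset.sum_congr rfl fun a _ => ?_
    simp [hf, MonoidAlgebra.mapDomainRingHom_apply, Finsupp.mapDomain_single]
  -- x as a sum
  have hxsum : x = ∑ s ∈ T, f (y s) * MonoidAlgebra.of k A (s : A) := by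
    have : ∀ s ∈ T, f (y s) * MonoidAlgebra.of k A (s : A) =
        ∑ a ∈ x.coeff.support.filter (fun a => σ' a = s), MonoidAlgebra.single a (x.coeff a) := by
      intro s _
      rw [hfy, Finset.sum_mul]
      refine Finset.sum_congr rfl fun a ha => ?_
      have has : σ a = (s : A) := congrArg Subtype.val (Finset.mem_filter.mp ha).2
      rw [MonoidAlgebra.of_apply, MonoidAlgebra.single_mul_single, mul_one, has,
        inv_mul_cancel_right]
    rw [Finset.sum_congr rfl this,
      Finset.sum_fiberwise_of_maps_to (fun a ha => Finset.mem_image_of_mem σ' ha)]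
    exact (MonoidAlgebra.sum_coeff_single x).symm
  -- each f (y s) • w lies in wkB
  have hmem : ∀ s : S, f (y s) • w ∈ wkB := by
    intro s
    rw [hfy, Finset.sum_smul]
    refine Submodule.sum_mem _ fun a _ => ?_
    have h1 : MonoidAlgebra.single (a * (σ a)⁻¹) (x.coeff a) =
        x.coeff a • MonoidAlgebra.of k A (a * (σ a)⁻¹) := by
      rw [MonoidAlgebra.of_apply, MonoidAlgebra.smul_single', mul_one]
    rw [h1, smul_assoc]
    exact Submodule.smul_mem _ _ (hwkB ▸ Submodule.subset_span ⟨a * (σ a)⁻¹, hσB a, rfl⟩)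
  -- x • w as a sum of components
  have hxw2 : ∑ s ∈ T, gsmul k W (s : A) (f (y s) • w) = 0 := by
    have : ∀ s : S, gsmul k W (s : A) (f (y s) • w) =
        (f (y s) * MonoidAlgebra.of k A (s : A)) • w := by
      intro s
      show MonoidAlgebra.of k A (s : A) • (f (y s) • w) = _
      rw [← mul_smul, mul_comm]
    rw [Finset.sum_congr rfl (fun s _ => this s), ← Finset.sum_smul, ← hxsum, hxw]
  -- independence forces each component to vanish
  have hcomp : ∀ s ∈ T, gsmul k W (s : A) (f (y s) • w) = 0 :=
    iSupIndep_sum_eq_zero hindep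
      (fun s _ => Submodule.mem_map_of_mem (hmem s)) hxw2
  -- gsmul is injective, so f (y s) • w = 0, i.e. y s ∈ I.comap f
  have hys : ∀ s ∈ T, y s ∈ I.comap f := by
    intro s hs
    have h0 : MonoidAlgebra.of k A (s : A) • (f (y s) • w) = 0 := hcomp s hs
    have h1 : f (y s) • w = 0 := by
      have h2 := congrArg (fun v => MonoidAlgebra.of k A ((s : A))⁻¹ • v) h0
      simp only [smul_zero, ← mul_smul, ← mul_assoc, ← map_mul, inv_mul_cancel, map_one, one_mul, one_smul] at h2
      exact h2
    exact Ideal.mem_comap.mpr ((Submodule.mem_annihilator_span_singleton w _).mpr h1)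
  -- conclude
  rw [hxsum]
  exact Ideal.sum_mem _ fun s hs =>
    Ideal.mul_mem_right _ _ (Ideal.mem_map_of_mem f (hys s hs))
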